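/- Let n ≥ 2, let a_0, …, a_{n−1} ∈ ℂ, let r_0, …, r_{n−1} : ℝ → ℂ be continuous, and let λ be a root of P(a;x) = x^n + ∑_{i=0}^{n−1} a_i x^i. Let z : ℝ → ℂ be (n−1)-times continuously differentiable and set y(t) = exp(∫_0^t (λ + z(s)) ds). Then y is a solution on ℝ of y^{(n)}(t) + ∑_{i=0}^{n−1}(a_i + r_i(t)) y^{(i)}(t) = 0 if and only if z is a solution on ℝ of D z(t) + P(r(t);λ) + L(t,z) + F(t, z, z', …, z^{(n−2)}) = 0. -/

import Mathlib

open MeasureTheory Filter Topology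
open scoped ENNReal NNReal

noncomputable section

/-- Bochner-almost periodic function `ℝ → ℂ`. -/
def AP (f : ℝ → ℂ) : Prop :=
  Continuous f ∧ ∀ b : ℕ → ℝ, ∃ φ : ℕ → ℕ, StrictMono φ ∧ ∃ g : ℝ → ℂ,
    TendstoUniformly (fun m t => f (t + b (φ m))) g atTop

/-- Bounded continuous. -/
def BCb (f : ℝ → ℂ) : Prop := Continuous f ∧ ∃ C : ℝ, ∀ t, ‖f t‖ ≤ C

def BC0 (f : ℝ → ℂ) : Prop := BCb f ∧ Tendsto f atTop (nhds 0)

def C00 (f : ℝ → ℂ) : Prop := BC0 f ∧ Tendsto f atBot (nhds 0)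

def Lp0 (p : ℝ) (f : ℝ → ℂ) : Prop :=
  (∃ C : ℝ, ∀ t ≤ (0:ℝ), ‖f t‖ ≤ C) ∧ (∫⁻ t in Set.Ioi (0:ℝ), (‖f t‖₊ : ℝ≥0∞) ^ p) < ⊤

def LpR (p : ℝ) (f : ℝ → ℂ) : Prop := (∫⁻ t : ℝ, (‖f t‖₊ : ℝ≥0∞) ^ p) < ⊤

def AAP (f : ℝ → ℂ) : Prop :=
  BCb f ∧ ∃ φ g : ℝ → ℂ, (∀ t, f t = φ t + g t) ∧ AP φ ∧ Tendsto g atTop (nhds 0)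

def AAP0 (f : ℝ → ℂ) : Prop :=
  BCb f ∧ ∃ φ g : ℝ → ℂ, (∀ t, f t = φ t + g t) ∧ AP φ ∧
    Tendsto g atTop (nhds 0) ∧ Tendsto g atBot (nhds 0)

def APp (p : ℝ) (f : ℝ → ℂ) : Prop :=
  BCb f ∧ ∃ φ g : ℝ → ℂ, (∀ t, f t = φ t + g t) ∧ AP φ ∧ Lp0 p g

def APp0 (p : ℝ) (f : ℝ → ℂ) : Prop :=
  BCb f ∧ ∃ φ g : ℝ → ℂ, (∀ t, f t = φ t + g t) ∧ AP φ ∧ LpR p g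

/-- The Green kernel `g_ω`. -/
def gker (ω : ℂ) (t s : ℝ) : ℂ :=
  if Real.sign ω.re * (t - s) < 0
  then ((-Real.sign ω.re : ℝ) : ℂ) * Complex.exp (ω * ((t - s : ℝ) : ℂ)) else 0

/-- The Green operator `G_ω`. -/
def Gop (ω : ℂ) (f : ℝ → ℂ) (t : ℝ) : ℂ := ∫ s : ℝ, gker ω t s * f s

/-- The absolute Green operator `I_ω`, with values in `[0,∞]`. -/
def Iop (ω : ℂ) (f : ℝ → ℂ) (t : ℝ) : ℝ≥0∞ := ∫⁻ s : ℝ, (‖gker ω t s * f s‖₊ : ℝ≥0∞)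

def Gam {m : ℕ} (γ : Fin m → ℂ) (j : Fin m) : ℂ := ∏ k ∈ Finset.univ.erase j, (γ j - γ k)

/-- The Green operator for the family γ. -/
def GreenOp {m : ℕ} (γ : Fin m → ℂ) (f : ℝ → ℂ) (t : ℝ) : ℂ :=
  ∑ j, (Gam γ j)⁻¹ * Gop (γ j) f t

def Dpoly {m : ℕ} (γ : Fin m → ℂ) : Polynomial ℂ := ∏ j, (Polynomial.X - Polynomial.C (γ j))

/-- The differential operator with characteristic polynomial `∏ (x - γ j)`. -/
def Dop {m : ℕ} (γ : Fin m → ℂ) (z : ℝ → ℂ) (t : ℝ) : ℂ :=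
  ∑ k ∈ Finset.range (m + 1), (Dpoly γ).coeff k * iteratedDeriv k z t

def APm (m : ℕ) (F : ℝ → (Fin m → ℂ) → ℂ) : Prop :=
  Continuous (fun p : ℝ × (Fin m → ℂ) => F p.1 p.2) ∧
  ∀ b : ℕ → ℝ, ∃ φ : ℕ → ℕ, StrictMono φ ∧ ∃ G : ℝ → (Fin m → ℂ) → ℂ,
    ∀ K : Set (Fin m → ℂ), IsCompact K →
      TendstoUniformlyOn (fun k (p : ℝ × (Fin m → ℂ)) => F (p.1 + b (φ k)) p.2)
        (fun p => G p.1 p.2) atTop (Set.univ ×ˢ K)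

def DecayTop (m : ℕ) (h : ℝ → (Fin m → ℂ) → ℂ) : Prop :=
  ∀ K : Set (Fin m → ℂ), IsCompact K →
    TendstoUniformlyOn (fun t x => h t x) 0 atTop K

def DecayBot (m : ℕ) (h : ℝ → (Fin m → ℂ) → ℂ) : Prop :=
  ∀ K : Set (Fin m → ℂ), IsCompact K →
    TendstoUniformlyOn (fun t x => h t x) 0 atBot K

def AAPm (m : ℕ) (F : ℝ → (Fin m → ℂ) → ℂ) : Prop :=
  Continuous (fun p : ℝ × (Fin m → ℂ) => F p.1 p.2) ∧ (∃ C : ℝ, ∀ t x, ‖F t x‖ ≤ C) ∧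
  ∃ Φ h : ℝ → (Fin m → ℂ) → ℂ, (∀ t x, F t x = Φ t x + h t x) ∧ APm m Φ ∧ DecayTop m h

def AAP0m (m : ℕ) (F : ℝ → (Fin m → ℂ) → ℂ) : Prop :=
  Continuous (fun p : ℝ × (Fin m → ℂ) => F p.1 p.2) ∧ (∃ C : ℝ, ∀ t x, ‖F t x‖ ≤ C) ∧
  ∃ Φ h : ℝ → (Fin m → ℂ) → ℂ, (∀ t x, F t x = Φ t x + h t x) ∧ APm m Φ ∧
    DecayTop m h ∧ DecayBot m h

/-- Complete Bell polynomials. -/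
def Bell : ℕ → (ℕ → ℂ) → ℂ
  | 0, _ => 1
  | (i+1), x => ∑ j ∈ Finset.range (i+1), (Nat.choose i j : ℂ) * Bell (i - j) x * x (j+1)
decreasing_by exact Nat.lt_succ_of_le (Nat.sub_le i j)

/-- `f_i(x_1,…,x_i) = B_{i+1}(x_1,…,x_i,0)`. -/
def fBell (i : ℕ) (x : ℕ → ℂ) : ℂ := Bell (i+1) (fun k => if k = i+1 then 0 else x k)

def Pa (n : ℕ) (a : ℕ → ℂ) : Polynomial ℂ :=
  Polynomial.X ^ n + ∑ i ∈ Finset.range n, Polynomial.C (a i) * Polynomial.X ^ i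

def Prl (n : ℕ) (r : ℕ → ℝ → ℂ) (lam : ℂ) (t : ℝ) : ℂ :=
  ∑ k ∈ Finset.range n, lam ^ k * r k t

/-- `(d^k/dλ^k) P(r(t);λ)`. -/
def PrlD (n k : ℕ) (r : ℕ → ℝ → ℂ) (lam : ℂ) (t : ℝ) : ℂ :=
  (Nat.factorial k : ℂ) * ∑ i ∈ Finset.range n, (Nat.choose i k : ℂ) * lam ^ (i - k) * r i t

def DopP (n : ℕ) (a : ℕ → ℂ) (lam : ℂ) (z : ℝ → ℂ) (t : ℝ) : ℂ :=
  ∑ j ∈ Finset.Icc 1 n, ((Nat.factorial j : ℂ))⁻¹ *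
    Polynomial.eval lam (Polynomial.derivative^[j] (Pa n a)) * iteratedDeriv (j-1) z t

def Lterm (n : ℕ) (r : ℕ → ℝ → ℂ) (lam : ℂ) (z : ℝ → ℂ) (t : ℝ) : ℂ :=
  ∑ k ∈ Finset.Icc 1 (n-1), ((Nat.factorial k : ℂ))⁻¹ * PrlD n k r lam t * iteratedDeriv (k-1) z t

def Fterm (n : ℕ) (a : ℕ → ℂ) (r : ℕ → ℝ → ℂ) (lam : ℂ) (z : ℝ → ℂ) (t : ℝ) : ℂ :=
  ∑ i ∈ Finset.Icc 2 n, ∑ j ∈ Finset.range (n - i + 1),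
    (Nat.choose (i+j) j : ℂ) * (a (i+j) + r (i+j) t) * lam ^ j *
      fBell (i-1) (fun k => iteratedDeriv (k-1) z t)

def aT (n : ℕ) {m : ℕ} (γ : Fin m → ℂ) (j : Fin m) : ℝ :=
  ∑ i ∈ Finset.range (n-1), ‖γ j‖ ^ i

def Lconst (n : ℕ) (γ : Fin (n-1) → ℂ) (r : ℕ → ℝ → ℂ) (lam : ℂ) (β : ℝ) : ℝ≥0∞ :=
  ∑ j, ∑ k ∈ Finset.Icc 1 (n-1),
    ENNReal.ofReal (aT n γ j / (‖Gam γ j‖ * (Nat.factorial k))) *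
      ⨆ t : ℝ, Iop (((γ j).re - Real.sign (γ j).re * β : ℝ) : ℂ) (PrlD n k r lam) t

def Qconst (n : ℕ) (γ : Fin (n-1) → ℂ) (a : ℕ → ℂ) (r : ℕ → ℝ → ℂ) (lam : ℂ) (β : ℝ) : ℝ≥0∞ :=
  ∑ j, ∑ i ∈ Finset.Icc 2 n, ∑ k ∈ Finset.range (i-1),
    ENNReal.ofReal (aT n γ j / ‖Gam γ j‖ * (Nat.choose i k) * ‖lam‖ ^ k) *
      (ENNReal.ofReal (‖a i‖ / |(γ j).re - Real.sign (γ j).re * β|) +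
        ⨆ t : ℝ, Iop (((γ j).re - Real.sign (γ j).re * β : ℝ) : ℂ) (r i) t)

def mConst (n : ℕ) (δ : ℝ) : ℝ :=
  sSup { q : ℝ | ∃ i ∈ Finset.Icc 1 (n-1), ∃ X Y : ℕ → ℂ,
    (∑ k ∈ Finset.Icc 1 i, ‖X k‖) ≤ δ ∧
    (∑ k ∈ Finset.Icc 1 i, ‖Y k‖) ≤ δ ∧
    (∑ k ∈ Finset.Icc 1 i, ‖X k - Y k‖) ≠ 0 ∧
    q = ‖fBell i X - fBell i Y‖ / ∑ k ∈ Finset.Icc 1 i, ‖X k - Y k‖ }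


/-- The nonlinear term written with complete Bell polynomials:
`F(t,z,…) = ∑_{i=2}^n ∑_{j=0}^{n-i} C(i+j,j)(a_{i+j}+r_{i+j}(t))λ^j [B_i(z,…,z^{(i-1)}) - z^{(i-1)}]`. -/
def FtermB (n : ℕ) (a : ℕ → ℂ) (r : ℕ → ℝ → ℂ) (lam : ℂ) (z : ℝ → ℂ) (t : ℝ) : ℂ :=
  ∑ i ∈ Finset.Icc 2 n, ∑ j ∈ Finset.range (n - i + 1),
    (Nat.choose (i+j) j : ℂ) * (a (i+j) + r (i+j) t) * lam ^ j *
      (Bell i (fun k => iteratedDeriv (k-1) z t) - iteratedDeriv (i-1) z t)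

/-! Write `y = e^{λt} u` with `u = exp ∫₀ᵗ z`. Since `u' = z u`, the Leibniz rule gives
`u^{(m+1)} = ∑ C(m,j) z^{(j)} u^{(m-j)}`, which is exactly the recursion defining the complete Bell
polynomials; hence `u^{(m)} = B_m(z, …, z^{(m-1)}) u` and, by Leibniz again,
`y^{(m)} = y ∑_i C(m,i) λ^{m-i} B_i`. Summing against the coefficients of `P(a + r(t); x)` is a
Taylor expansion at `λ`: the equation for `y` reads `y ∑_i (1/i!) P^{(i)}(a + r(t); λ) B_i = 0`.
The `i = 0` term is `P(r(t); λ)` because `P(a; λ) = 0`, and splitting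
`B_i = z^{(i-1)} + (B_i - z^{(i-1)})` for `i ≥ 1` produces `D z + L(t,z) + F`. As `y` never
vanishes, the two equations are equivalent. -/

open Polynomial

theorem Bell_zero (x : ℕ → ℂ) : Bell 0 x = 1 := by
  rw [Bell]

theorem Bell_succ (i : ℕ) (x : ℕ → ℂ) :
    Bell (i + 1) x = ∑ j ∈ Finset.range (i + 1), (i.choose j : ℂ) * Bell (i - j) x * x (j + 1) := by
  rw [Bell]

theorem Bell_one (x : ℕ → ℂ) : Bell 1 x = x 1 := by
  simp [Bell_succ, Bell_zero]

section LinearODE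

variable {𝕜 : Type*} [NontriviallyNormedField 𝕜] [NormedAlgebra 𝕜 ℂ] {w u : 𝕜 → ℂ} {N : ℕ}

theorem contDiff_succ_of_hasDerivAt_mul (hw : ContDiff 𝕜 N w)
    (hu : ∀ t, HasDerivAt u (w t * u t) t) : ContDiff 𝕜 (N + 1) u := by
  have hderiv : deriv u = w * u := funext fun t => (hu t).deriv
  have hdiff : Differentiable 𝕜 u := fun t => (hu t).differentiableAt
  suffices ∀ k ≤ N + 1, ContDiff 𝕜 k u by exact_mod_cast this (N + 1) le_rfl
  intro k hk
  induction k with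
  | zero => exact contDiff_zero.mpr hdiff.continuous
  | succ k ih =>
    push_cast
    refine contDiff_succ_iff_deriv.mpr ⟨hdiff, fun h => by simp at h, ?_⟩
    rw [hderiv]
    exact (hw.of_le (by exact_mod_cast (by omega : k ≤ N))).mul (ih (by omega))

theorem iteratedDeriv_eq_Bell_mul (hw : ContDiff 𝕜 N w) (hu : ∀ t, HasDerivAt u (w t * u t) t)
    {m : ℕ} (hm : m ≤ N + 1) (t : 𝕜) :
    iteratedDeriv m u t = Bell m (fun k => iteratedDeriv (k - 1) w t) * u t := by
  have hderiv : deriv u = w * u := funext fun t => (hu t).deriv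
  have hu' := contDiff_succ_of_hasDerivAt_mul hw hu
  induction m using Nat.strong_induction_on generalizing t with
  | _ m ih =>
    rcases m with _ | m
    · simp [Bell_zero]
    rw [iteratedDeriv_succ', hderiv, iteratedDeriv_mul
      ((hw.of_le (by exact_mod_cast (by omega : m ≤ N))).contDiffAt)
      ((hu'.of_le (by exact_mod_cast (by omega : m ≤ N + 1))).contDiffAt), Bell_succ,
      Finset.sum_mul]
    refine Finset.sum_congr rfl fun j hj => ?_
    rw [ih (m - j) (by omega) (by omega), Nat.add_sub_cancel]
    ring

end LinearODE

theorem iteratedDeriv_cexp_ofReal_const_mul (c : ℂ) (k : ℕ) :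
    iteratedDeriv k (fun t : ℝ => Complex.exp (c * t)) =
      fun t : ℝ => c ^ k * Complex.exp (c * t) := by
  induction k with
  | zero => simp
  | succ k ih =>
    ext t
    have h : HasDerivAt (fun t : ℝ => Complex.exp (c * t)) (Complex.exp (c * t) * c) t := by
      simpa using ((hasDerivAt_id (t : ℂ)).const_mul c).cexp.comp_ofReal
    rw [iteratedDeriv_succ, ih, (h.const_mul (c ^ k)).deriv]
    ring

theorem iteratedDeriv_cexp_integral_const_add {z : ℝ → ℂ} {N : ℕ} (hz : ContDiff ℝ N z)
    (c : ℂ) {m : ℕ} (hm : m ≤ N + 1) (t : ℝ) :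
    iteratedDeriv m (fun t => Complex.exp (∫ s in (0 : ℝ)..t, (c + z s))) t =
      (∑ i ∈ Finset.range (m + 1), (m.choose i : ℂ) * c ^ (m - i) *
        Bell i (fun k => iteratedDeriv (k - 1) z t)) *
        Complex.exp (∫ s in (0 : ℝ)..t, (c + z s)) := by
  set u : ℝ → ℂ := fun t => Complex.exp (∫ s in (0 : ℝ)..t, z s)
  have hu : ∀ t, HasDerivAt u (z t * u t) t := fun t => by
    simpa [u, mul_comm] using (hz.continuous.integral_hasStrictDerivAt 0 t).hasDerivAt.cexp
  have hsplit : (fun t => Complex.exp (∫ s in (0 : ℝ)..t, (c + z s))) =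
      fun t => u t * Complex.exp (c * t) := by
    ext t
    rw [intervalIntegral.integral_add intervalIntegrable_const
      (hz.continuous.intervalIntegrable _ _), intervalIntegral.integral_const, Complex.exp_add]
    simp [u, mul_comm]
  have hexp : ContDiff ℝ m (fun t : ℝ => Complex.exp (c * t)) :=
    (contDiff_const.mul Complex.ofRealCLM.contDiff).cexp
  rw [hsplit, iteratedDeriv_fun_mul
    ((contDiff_succ_of_hasDerivAt_mul hz hu).of_le (by exact_mod_cast hm)).contDiffAt
    hexp.contDiffAt, Finset.sum_mul]
  refine Finset.sum_congr rfl fun i hi => ?_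
  simp only [iteratedDeriv_cexp_ofReal_const_mul]
  rw [iteratedDeriv_eq_Bell_mul hz hu (by simp at hi; omega), congrFun hsplit t]
  ring

namespace Polynomial

variable {R : Type*} [CommRing R]

theorem eval_hasseDeriv_eq_sum_range (p : R[X]) {N : ℕ} (hp : p.natDegree ≤ N) (i : ℕ) (c : R) :
    (hasseDeriv i p).eval c =
      ∑ j ∈ Finset.range (N - i + 1), ((i + j).choose j : R) * p.coeff (i + j) * c ^ j := by
  rw [eval_eq_sum_range' (n := N - i + 1) (by have := natDegree_hasseDeriv_le p i; omega)]
  refine Finset.sum_congr rfl fun j _ => ?_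
  rw [hasseDeriv_coeff, add_comm j i, Nat.choose_symm_add]

/-- Expanding `p (X + c)` in powers of `X`, with `X ^ i` read as `b i`. -/
theorem sum_coeff_mul_sum_choose_eq (p : R[X]) {N : ℕ} (hp : p.natDegree ≤ N) (c : R)
    (b : ℕ → R) :
    ∑ m ∈ Finset.range (N + 1), p.coeff m *
        ∑ i ∈ Finset.range (m + 1), (m.choose i : R) * c ^ (m - i) * b i =
      ∑ i ∈ Finset.range (N + 1), (hasseDeriv i p).eval c * b i := by
  have hext : ∀ m ∈ Finset.range (N + 1),
      ∑ i ∈ Finset.range (m + 1), (m.choose i : R) * c ^ (m - i) * b i =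
        ∑ i ∈ Finset.range (N + 1), (m.choose i : R) * c ^ (m - i) * b i := fun m hm =>
    Finset.sum_subset (by simp at hm ⊢; omega) fun i _ hi => by
      simp [Nat.choose_eq_zero_of_lt (by simpa using hi : m < i)]
  rw [Finset.sum_congr rfl fun m hm => by rw [hext m hm]]
  simp only [Finset.mul_sum]
  rw [Finset.sum_comm]
  refine Finset.sum_congr rfl fun i _ => ?_
  rw [hasseDeriv_apply, eval_sum, sum_over_range' _ (by simp) (N + 1) (by omega), Finset.sum_mul]
  refine Finset.sum_congr rfl fun m _ => ?_
  rw [eval_monomial]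
  ring

theorem eval_hasseDeriv_eq_inv_factorial_mul {K : Type*} [Field K] [CharZero K] (p : K[X])
    (k : ℕ) (c : K) :
    (hasseDeriv k p).eval c = (k.factorial : K)⁻¹ * (derivative^[k] p).eval c := by
  rw [← factorial_smul_hasseDeriv, LinearMap.smul_apply, eval_smul, nsmul_eq_mul,
    inv_mul_cancel_left₀ (by exact_mod_cast k.factorial_ne_zero)]

theorem coeff_sum_range_C_mul_X_pow {R : Type*} [Semiring R] (n : ℕ) (c : ℕ → R) (m : ℕ) :
    (∑ i ∈ Finset.range n, C (c i) * X ^ i).coeff m = if m < n then c m else 0 := by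
  simp [finsetSum_coeff]

end Polynomial

/-- The polynomial `P(r(t); ·)`. -/
def PrPoly (n : ℕ) (r : ℕ → ℝ → ℂ) (t : ℝ) : ℂ[X] :=
  ∑ i ∈ Finset.range n, C (r i t) * X ^ i

theorem eval_PrPoly (n : ℕ) (r : ℕ → ℝ → ℂ) (lam : ℂ) (t : ℝ) :
    (PrPoly n r t).eval lam = Prl n r lam t := by
  simp only [PrPoly, Prl, eval_finsetSum, eval_mul, eval_C, eval_pow, eval_X]
  exact Finset.sum_congr rfl fun i _ => mul_comm _ _

theorem eval_hasseDeriv_PrPoly (n k : ℕ) (r : ℕ → ℝ → ℂ) (lam : ℂ) (t : ℝ) :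
    (hasseDeriv k (PrPoly n r t)).eval lam = (k.factorial : ℂ)⁻¹ * PrlD n k r lam t := by
  rw [PrlD, inv_mul_cancel_left₀ (by exact_mod_cast k.factorial_ne_zero)]
  simp only [PrPoly, C_mul_X_pow_eq_monomial, map_sum, hasseDeriv_monomial, eval_finsetSum,
    eval_monomial]
  exact Finset.sum_congr rfl fun i _ => by ring

theorem PrlD_eq_zero_of_le {n k : ℕ} (h : n ≤ k) (r : ℕ → ℝ → ℂ) (lam : ℂ) (t : ℝ) :
    PrlD n k r lam t = 0 := by
  rw [PrlD, Finset.sum_eq_zero fun i hi => by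
    rw [Nat.choose_eq_zero_of_lt (by simp at hi; omega), Nat.cast_zero, zero_mul, zero_mul],
    mul_zero]

theorem natDegree_Pa_le (n : ℕ) (a : ℕ → ℂ) : (Pa n a).natDegree ≤ n :=
  natDegree_add_le_of_degree_le (natDegree_X_pow_le n) <| natDegree_sum_le_of_forall_le _ _
    fun i hi => (natDegree_C_mul_X_pow_le _ i).trans (by simp at hi; omega)

theorem natDegree_PrPoly_le (n : ℕ) (r : ℕ → ℝ → ℂ) (t : ℝ) : (PrPoly n r t).natDegree ≤ n :=
  natDegree_sum_le_of_forall_le _ _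
    fun i hi => (natDegree_C_mul_X_pow_le _ i).trans (by simp at hi; omega)

theorem coeff_Pa {n : ℕ} {a : ℕ → ℂ} (han : a n = 1) {m : ℕ} (hm : m ≤ n) :
    (Pa n a).coeff m = a m := by
  rw [Pa, coeff_add, coeff_X_pow, coeff_sum_range_C_mul_X_pow]
  rcases hm.lt_or_eq with hm | rfl
  · simp [hm.ne, hm]
  · simp [han]

theorem coeff_PrPoly {n : ℕ} {r : ℕ → ℝ → ℂ} {t : ℝ} (hrn : r n t = 0) {m : ℕ} (hm : m ≤ n) :
    (PrPoly n r t).coeff m = r m t := by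
  rw [PrPoly, coeff_sum_range_C_mul_X_pow]
  rcases hm.lt_or_eq with hm | rfl
  · simp [hm]
  · simp [hrn]

theorem natDegree_Pa_add_PrPoly_le (n : ℕ) (a : ℕ → ℂ) (r : ℕ → ℝ → ℂ) (t : ℝ) :
    (Pa n a + PrPoly n r t).natDegree ≤ n :=
  natDegree_add_le_of_degree_le (natDegree_Pa_le n a) (natDegree_PrPoly_le n r t)

theorem coeff_Pa_add_PrPoly {n : ℕ} {a : ℕ → ℂ} {r : ℕ → ℝ → ℂ} {t : ℝ} (han : a n = 1)
    (hrn : r n t = 0) {m : ℕ} (hm : m ≤ n) : (Pa n a + PrPoly n r t).coeff m = a m + r m t := by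
  rw [coeff_add, coeff_Pa han hm, coeff_PrPoly hrn hm]

theorem sum_eval_hasseDeriv_mul_Bell {n : ℕ} {a : ℕ → ℂ} {r : ℕ → ℝ → ℂ} {lam : ℂ} {t : ℝ}
    (han : a n = 1) (hrn : r n t = 0) (hlam : (Pa n a).eval lam = 0) (z : ℝ → ℂ) :
    ∑ i ∈ Finset.range (n + 1), (hasseDeriv i (Pa n a + PrPoly n r t)).eval lam *
        Bell i (fun k => iteratedDeriv (k - 1) z t) =
      DopP n a lam z t + Prl n r lam t + Lterm n r lam z t + FtermB n a r lam z t := by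
  set b : ℕ → ℂ := fun i => Bell i (fun k => iteratedDeriv (k - 1) z t)
  set q : ℕ → ℂ := fun i => (hasseDeriv i (Pa n a + PrPoly n r t)).eval lam
  have hq0 : q 0 = Prl n r lam t := by
    simp [q, hlam, eval_PrPoly]
  have hq : ∀ i, q i = (i.factorial : ℂ)⁻¹ * (derivative^[i] (Pa n a)).eval lam +
      (i.factorial : ℂ)⁻¹ * PrlD n i r lam t := fun i => by
    simp only [q, map_add, eval_add]
    rw [eval_hasseDeriv_eq_inv_factorial_mul, eval_hasseDeriv_PrPoly]
  have hL : Lterm n r lam z t = ∑ i ∈ Finset.Icc 1 n,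
      (i.factorial : ℂ)⁻¹ * PrlD n i r lam t * iteratedDeriv (i - 1) z t := by
    refine Finset.sum_subset (Finset.Icc_subset_Icc_right (Nat.sub_le n 1)) fun i hi hi' => ?_
    obtain rfl : i = n := by simp at hi hi'; omega
    rw [PrlD_eq_zero_of_le le_rfl, mul_zero, zero_mul]
  have hF : FtermB n a r lam z t =
      ∑ i ∈ Finset.Icc 1 n, q i * (b i - iteratedDeriv (i - 1) z t) := by
    refine (Finset.sum_congr rfl fun i hi => ?_).trans
      (Finset.sum_subset (Finset.Icc_subset_Icc_left one_le_two) fun i hi hi' => ?_)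
    · simp only [q, b]
      rw [← Finset.sum_mul, eval_hasseDeriv_eq_sum_range _ (natDegree_Pa_add_PrPoly_le n a r t)]
      refine congrArg (· * _) (Finset.sum_congr rfl fun j hj => ?_)
      have hij : i + j ≤ n := by simp at hi hj; omega
      rw [coeff_Pa_add_PrPoly han hrn hij, mul_right_comm]
    · obtain rfl : i = 1 := by simp at hi hi'; omega
      simp [b, Bell_one]
  have hpos : ∑ i ∈ Finset.Icc 1 n, q i * b i =
      DopP n a lam z t + Lterm n r lam z t + FtermB n a r lam z t := by
    rw [hL, hF, DopP, ← Finset.sum_add_distrib, ← Finset.sum_add_distrib]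
    refine Finset.sum_congr rfl fun i _ => ?_
    rw [hq i]
    ring
  rw [Finset.range_eq_Ico, Finset.sum_eq_sum_Ico_succ_bot n.succ_pos]
  change q 0 * b 0 + ∑ i ∈ Finset.Ico 1 (n + 1), q i * b i = _
  rw [Finset.Ico_add_one_right_eq_Icc, hpos, hq0]
  simp only [b, Bell_zero]
  ring

theorem stmt11_general (n : ℕ) (a : ℕ → ℂ) (r : ℕ → ℝ → ℂ)
    (han : a n = 1) (hrn : ∀ t, r n t = 0)
    (lam : ℂ) (hlam : Polynomial.eval lam (Pa n a) = 0)
    (z : ℝ → ℂ) (hz : ContDiff ℝ ((n - 1 : ℕ) : ℕ∞) z)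
    (y : ℝ → ℂ) (hy : ∀ t, y t = Complex.exp (∫ s in (0:ℝ)..t, (lam + z s))) :
    (∀ t, iteratedDeriv n y t +
        ∑ i ∈ Finset.range n, (a i + r i t) * iteratedDeriv i y t = 0) ↔
    (∀ t, DopP n a lam z t + Prl n r lam t + Lterm n r lam z t + FtermB n a r lam z t = 0) := by
  refine forall_congr' fun t => ?_
  set P := Pa n a + PrPoly n r t
  have hcoeff : ∀ m ≤ n, P.coeff m = a m + r m t := fun m hm => coeff_Pa_add_PrPoly han (hrn t) hm
  have hode : iteratedDeriv n y t + ∑ i ∈ Finset.range n, (a i + r i t) * iteratedDeriv i y t =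
      ∑ m ∈ Finset.range (n + 1), P.coeff m * iteratedDeriv m y t := by
    rw [Finset.sum_range_succ, hcoeff n le_rfl, han, hrn t, add_zero, one_mul, add_comm]
    exact congrArg (· + _) (Finset.sum_congr rfl fun m hm => by
      rw [hcoeff m (by simp at hm; omega)])
  obtain rfl : y = _ := funext hy
  rw [hode, Finset.sum_congr rfl fun m hm => by
      rw [iteratedDeriv_cexp_integral_const_add hz lam (by simp at hm; omega), ← mul_assoc],
    ← Finset.sum_mul, sum_coeff_mul_sum_choose_eq P (natDegree_Pa_add_PrPoly_le n a r t),
    sum_eval_hasseDeriv_mul_Bell han (hrn t) hlam, mul_eq_zero, or_iff_left (Complex.exp_ne_zero _)]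

/-- `y = exp(∫_0^t (λ + z))` solves the perturbed linear equation iff `z`
solves the Riccati-type equation `Dz + P(r;λ) + L(t,z) + F(t,z,…,z^{(n-2)}) = 0`. -/
theorem stmt11 (n : ℕ) (hn : 2 ≤ n) (a : ℕ → ℂ) (r : ℕ → ℝ → ℂ)
    (hrc : ∀ i, Continuous (r i)) (han : a n = 1) (hrn : ∀ t, r n t = 0)
    (lam : ℂ) (hlam : Polynomial.eval lam (Pa n a) = 0)
    (z : ℝ → ℂ) (hz : ContDiff ℝ ((n - 1 : ℕ) : ℕ∞) z)
    (y : ℝ → ℂ) (hy : ∀ t, y t = Complex.exp (∫ s in (0:ℝ)..t, (lam + z s))) :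
    (∀ t, iteratedDeriv n y t +
        ∑ i ∈ Finset.range n, (a i + r i t) * iteratedDeriv i y t = 0) ↔
    (∀ t, DopP n a lam z t + Prl n r lam t + Lterm n r lam z t + FtermB n a r lam z t = 0) :=
  stmt11_general n a r han hrn lam hlam z hz y hy

end
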